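/- Let U, V ∈ ℝ_max^{m×n}, b, d ∈ ℝ_max^m, p ∈ ℝ_max^n and q ∈ (ℝ ∪ {+∞})^n. Define Λ = { λ ∈ ℝ : ∃ x ∈ ℝ^n such that p_i ≤ λ + x_i for all i, x_i ≤ λ + q_i for all i with q_i ∈ ℝ, and max( max_j (u_{ij} + x_j), b_i ) ≤ max( max_j (v_{ij} + x_j), d_i ) for all i }. Then: (i) Λ is an upper set of ℝ (λ ∈ Λ and λ ≤ μ imply μ ∈ Λ); and (ii) if Λ is nonempty and bounded below, then inf Λ ∈ Λ, i.e., the optimal value of the tropical pseudolinear optimization problem is attained as a minimum of Λ. -/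

import Mathlib

/-!
Fix, for every row `i`, a term `σ i` of `V ⊗ x ⊕ d` attaining its maximum. Then every constraint
becomes an inequality `e + x_a ≤ f + x_b (+ λ)` between single terms, i.e. a difference constraint
`x_a - x_b ≤ c(λ)` with `c` continuous in `λ` (or a constraint that is trivially true or false),
so `Λ` is the finite union over `σ` of the parameter sets of feasible systems of difference
constraints. Fourier–Motzkin elimination preserves such systems, since adding an upper and a
lower bound on the eliminated variable gives again a difference constraint; hence each of these
parameter sets is an intersection of closed half-lines `{λ | 0 ≤ c(λ)}`. So `Λ` is closed, and
a closed set contains its infimum.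
-/

theorem exists_between_of_forall_le_of_finite {α ι κ : Type*} [ConditionallyCompleteLattice α]
    [Nonempty α] [Finite ι] [Finite κ] {f : ι → α} {g : κ → α} (h : ∀ i j, f i ≤ g j) :
    ∃ y, (∀ i, f i ≤ y) ∧ ∀ j, y ≤ g j := by
  rcases isEmpty_or_nonempty ι with hι | hι
  · obtain ⟨y, hy⟩ := Finite.bddBelow_range g
    exact ⟨y, isEmptyElim, fun j => hy ⟨j, rfl⟩⟩
  · have hf : BddAbove (Set.range f) := Finite.bddAbove_range f
    exact ⟨⨆ i, f i, le_ciSup hf, fun j => ciSup_le (h · j)⟩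

theorem iSup_le_iSup_iff_exists {α ι κ : Type*} [CompleteLinearOrder α] [Finite κ] [Nonempty κ]
    {f : ι → α} {g : κ → α} : ⨆ i, f i ≤ ⨆ j, g j ↔ ∃ j, ∀ i, f i ≤ g j := by
  obtain ⟨j₀, hj₀⟩ := Finite.exists_max g
  refine ⟨fun h => ⟨j₀, fun i => (le_iSup f i).trans (h.trans (iSup_le hj₀))⟩, ?_⟩
  rintro ⟨j, hj⟩
  exact iSup_le fun i => (hj i).trans (le_iSup g j)

/-- `none` stands for a reference variable fixed to `0`. -/
structure DiffConstraint (T : Type*) [TopologicalSpace T] (N : ℕ) where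
  lhs : Option (Fin N)
  rhs : Option (Fin N)
  bound : C(T, ℝ)

namespace DiffConstraint

variable {T : Type*} [TopologicalSpace T] {N : ℕ}

def Holds (c : DiffConstraint T N) (t : T) (x : Fin N → ℝ) : Prop :=
  c.lhs.elim 0 x - c.rhs.elim 0 x ≤ c.bound t

def Feasible {κ : Type*} (c : κ → DiffConstraint T N) (t : T) : Prop :=
  ∃ x, ∀ k, (c k).Holds t x

def dropLast : Option (Fin (N + 1)) → Option (Fin N)
  | none => none
  | some i => Fin.lastCases none some i

theorem elim_snoc_of_ne_last {o : Option (Fin (N + 1))} (ho : o ≠ some (Fin.last N))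
    (x : Fin N → ℝ) (y : ℝ) : o.elim 0 (Fin.snoc x y) = (dropLast o).elim 0 x := by
  rcases o with _ | i
  · rfl
  · obtain ⟨j, rfl⟩ | rfl := Fin.eq_castSucc_or_eq_last i
    · simp [dropLast]
    · exact absurd rfl ho

def IsUpper (c : DiffConstraint T (N + 1)) : Prop :=
  c.lhs = some (Fin.last N) ∧ c.rhs ≠ some (Fin.last N)

def IsLower (c : DiffConstraint T (N + 1)) : Prop :=
  c.rhs = some (Fin.last N) ∧ c.lhs ≠ some (Fin.last N)

def project (c : DiffConstraint T (N + 1)) : DiffConstraint T N :=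
  ⟨dropLast c.lhs, dropLast c.rhs, c.bound⟩

def combine (u l : DiffConstraint T (N + 1)) : DiffConstraint T N :=
  ⟨dropLast l.lhs, dropLast u.rhs, u.bound + l.bound⟩

theorem holds_project_iff {c : DiffConstraint T (N + 1)} (hu : ¬c.IsUpper) (hl : ¬c.IsLower)
    (t : T) (x : Fin N → ℝ) (y : ℝ) : c.project.Holds t x ↔ c.Holds t (Fin.snoc x y) := by
  unfold IsUpper at hu
  unfold IsLower at hl
  push Not at hu hl
  by_cases hlhs : c.lhs = some (Fin.last N)
  · simp [Holds, project, hlhs, hu hlhs, dropLast]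
  · have hrhs : c.rhs ≠ some (Fin.last N) := fun h => hlhs (hl h)
    simp only [Holds, project, elim_snoc_of_ne_last hlhs, elim_snoc_of_ne_last hrhs]

theorem holds_iff_of_isUpper {u : DiffConstraint T (N + 1)} (hu : u.IsUpper)
    (t : T) (x : Fin N → ℝ) (y : ℝ) :
    u.Holds t (Fin.snoc x y) ↔ y ≤ (dropLast u.rhs).elim 0 x + u.bound t := by
  simp only [Holds, hu.1, elim_snoc_of_ne_last hu.2, Option.elim_some, Fin.snoc_last]
  exact sub_le_iff_le_add'

theorem holds_iff_of_isLower {l : DiffConstraint T (N + 1)} (hl : l.IsLower)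
    (t : T) (x : Fin N → ℝ) (y : ℝ) :
    l.Holds t (Fin.snoc x y) ↔ (dropLast l.lhs).elim 0 x - l.bound t ≤ y := by
  simp only [Holds, hl.1, elim_snoc_of_ne_last hl.2, Option.elim_some, Fin.snoc_last]
  exact sub_le_comm

theorem holds_combine_iff (u l : DiffConstraint T (N + 1)) (t : T) (x : Fin N → ℝ) :
    (combine u l).Holds t x ↔
      (dropLast l.lhs).elim 0 x - l.bound t ≤ (dropLast u.rhs).elim 0 x + u.bound t := by
  simp only [Holds, combine, ContinuousMap.add_apply]
  constructor <;> intro h <;> linarith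

def eliminate {κ : Type*} (c : κ → DiffConstraint T (N + 1)) :
    {k // ¬(c k).IsUpper ∧ ¬(c k).IsLower} ⊕ ({k // (c k).IsUpper} × {k // (c k).IsLower}) →
      DiffConstraint T N
  | .inl k => (c k).project
  | .inr (u, l) => combine (c u) (c l)

theorem feasible_eliminate_iff {κ : Type*} [Finite κ] (c : κ → DiffConstraint T (N + 1))
    (t : T) :
    Feasible (eliminate c) t ↔ Feasible c t := by
  constructor
  · rintro ⟨x, hx⟩
    obtain ⟨y, hlow, hup⟩ := exists_between_of_forall_le_of_finite
      (f := fun l : {k // (c k).IsLower} => (dropLast (c l).lhs).elim 0 x - (c l).bound t)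
      (g := fun u : {k // (c k).IsUpper} => (dropLast (c u).rhs).elim 0 x + (c u).bound t)
      fun l u => (holds_combine_iff _ _ t x).1 (hx (.inr (u, l)))
    refine ⟨Fin.snoc x y, fun k => ?_⟩
    by_cases hu : (c k).IsUpper
    · exact (holds_iff_of_isUpper hu t x y).2 (hup ⟨k, hu⟩)
    by_cases hl : (c k).IsLower
    · exact (holds_iff_of_isLower hl t x y).2 (hlow ⟨k, hl⟩)
    exact (holds_project_iff hu hl t x y).1 (hx (.inl ⟨k, hu, hl⟩))
  · rintro ⟨x, hx⟩
    rw [← Fin.snoc_init_self x] at hx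
    refine ⟨Fin.init x, ?_⟩
    rintro (⟨k, hu, hl⟩ | ⟨⟨u, hu⟩, ⟨l, hl⟩⟩)
    · exact (holds_project_iff hu hl t _ _).2 (hx k)
    · exact (holds_combine_iff _ _ t _).2 <|
        ((holds_iff_of_isLower hl t _ _).1 (hx l)).trans ((holds_iff_of_isUpper hu t _ _).1 (hx u))

theorem isClosed_setOf_feasible {κ : Type*} [Finite κ] (c : κ → DiffConstraint T N) :
    IsClosed {t | Feasible c t} := by
  induction N generalizing κ with
  | zero =>
    simp only [Feasible, Unique.exists_iff, Set.ofPred_forall]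
    exact isClosed_iInter fun k => isClosed_le continuous_const (c k).bound.continuous
  | succ N ih =>
    simp only [← feasible_eliminate_iff]
    exact ih (eliminate c)

open Classical in
/-- `⟨none, none, 0⟩` and `⟨none, none, -1⟩` are the constraints that always and never hold. -/
noncomputable def ofEReal (e f : EReal) (a b : Option (Fin N)) (g : C(T, ℝ)) :
    DiffConstraint T N :=
  if e = ⊥ ∨ f = ⊤ then ⟨none, none, 0⟩
  else if e = ⊤ ∨ f = ⊥ then ⟨none, none, -1⟩
  else ⟨a, b, g + .const T (f.toReal - e.toReal)⟩

theorem holds_ofEReal_iff (e f : EReal) (a b : Option (Fin N)) (g : C(T, ℝ)) (t : T)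
    (x : Fin N → ℝ) :
    (ofEReal e f a b g).Holds t x ↔
      e + (a.elim 0 x : ℝ) ≤ (g t : EReal) + f + (b.elim 0 x : ℝ) := by
  induction e using EReal.rec <;> induction f using EReal.rec <;>
    simp [ofEReal, Holds, ← EReal.coe_add]
  constructor <;> intro h <;> linarith

end DiffConstraint

theorem iSup_add_coe_sup_eq_iSup_option {ι : Type*} (A : ι → EReal) (c : EReal) (x : ι → ℝ) :
    (⨆ j, A j + (x j : EReal)) ⊔ c = ⨆ o : Option ι, o.elim c A + (o.elim 0 x : ℝ) := by
  rw [iSup_option, sup_comm]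
  simp

namespace TropicalPseudolinear

open DiffConstraint

variable {m n : ℕ} (U V : Fin m → Fin n → EReal) (b d : Fin m → EReal) (p q : Fin n → EReal)

def feasibleSet : Set ℝ :=
  {lam : ℝ | ∃ x : Fin n → ℝ,
    (∀ i, p i ≤ (lam : EReal) + (x i : EReal)) ∧
    (∀ i, q i ≠ ⊤ → (x i : EReal) ≤ (lam : EReal) + q i) ∧
    (∀ i, ((⨆ j, U i j + (x j : EReal)) ⊔ b i) ≤ ((⨆ j, V i j + (x j : EReal)) ⊔ d i))}

theorem isUpperSet_feasibleSet : IsUpperSet (feasibleSet U V b d p q) := by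
  rintro lam mu hle ⟨x, hp, hq, hrow⟩
  have hle' : (lam : EReal) ≤ mu := EReal.coe_le_coe_iff.2 hle
  exact ⟨x, fun i => (hp i).trans (by gcongr), fun i hi => (hq i hi).trans (by gcongr), hrow⟩

/-- `σ i` selects the term of the right-hand side of row `i` that is to dominate the left-hand
side, `none` standing for `d i`. -/
noncomputable def system (σ : Fin m → Option (Fin n)) :
    Fin n ⊕ Fin n ⊕ (Fin m × Option (Fin n)) → DiffConstraint ℝ n
  | .inl j => ofEReal (p j) 0 none (some j) (.id ℝ)
  | .inr (.inl j) => ofEReal 0 (q j) (some j) none (.id ℝ)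
  | .inr (.inr (i, o)) => ofEReal (o.elim (b i) (U i)) ((σ i).elim (d i) (V i)) o (σ i) 0

theorem mem_feasibleSet_iff (lam : ℝ) :
    lam ∈ feasibleSet U V b d p q ↔ ∃ σ, Feasible (system U V b d p q σ) lam := by
  have hq_top (j : Fin n) (x : Fin n → ℝ) :
      (q j ≠ ⊤ → (x j : EReal) ≤ lam + q j) ↔ (x j : EReal) ≤ lam + q j := by
    refine ⟨fun h => ?_, fun h _ => h⟩
    by_cases hj : q j = ⊤
    · simp [hj]
    · exact h hj
  simp only [feasibleSet, Set.mem_ofPred_eq, hq_top, iSup_add_coe_sup_eq_iSup_option,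
    iSup_le_iSup_iff_exists, Classical.skolem (b := fun _ => Option (Fin n))]
  simp only [Feasible, Sum.forall, Prod.forall, system, holds_ofEReal_iff]
  rw [exists_comm]
  simp

theorem isClosed_feasibleSet : IsClosed (feasibleSet U V b d p q) := by
  have hunion : feasibleSet U V b d p q = ⋃ σ, {lam | Feasible (system U V b d p q σ) lam} :=
    Set.ext fun lam => by simp only [mem_feasibleSet_iff, Set.mem_iUnion, Set.mem_ofPred_eq]
  rw [hunion]
  exact isClosed_iUnion_of_finite fun σ => isClosed_setOf_feasible _

end TropicalPseudolinear

theorem stmt17 (m n : ℕ) (U V : Fin m → Fin n → EReal) (b d : Fin m → EReal)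
    (p q : Fin n → EReal)
    (Λ : Set ℝ)
    (hΛ : Λ = {lam : ℝ | ∃ x : Fin n → ℝ,
        (∀ i, p i ≤ (lam : EReal) + (x i : EReal)) ∧
        (∀ i, q i ≠ ⊤ → (x i : EReal) ≤ (lam : EReal) + q i) ∧
        (∀ i, ((⨆ j, U i j + (x j : EReal)) ⊔ b i) ≤
              ((⨆ j, V i j + (x j : EReal)) ⊔ d i))}) :
    (∀ lam ∈ Λ, ∀ mu : ℝ, lam ≤ mu → mu ∈ Λ) ∧
    (Λ.Nonempty → BddBelow Λ → sInf Λ ∈ Λ) := by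
  change Λ = TropicalPseudolinear.feasibleSet U V b d p q at hΛ
  subst hΛ
  refine ⟨fun lam hlam mu hle => ?_, fun hne hbdd => ?_⟩
  · exact TropicalPseudolinear.isUpperSet_feasibleSet U V b d p q hle hlam
  · exact (TropicalPseudolinear.isClosed_feasibleSet U V b d p q).csInf_mem hne hbdd
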